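/- arXiv:2304.12267 — 2 statements merged into one kernel-verified Lean document; each statement's English description precedes it below -/
import Mathlib

section
/- Let K be a p-adic field (finite extension of ℚ_p) with uniformizer π, and let n be a positive integer. Let α be a root of the Eisenstein polynomial g(x) = x^{pn} + πx + π. Then L = K[α] is a totally ramified extension of K of degree pn, ord(g'(α)) = ord(π), and there is no uniformizer τ of L with τ^{pn} ∈ K. -/
/-!
Eisenstein's equation forces `ord α = ord π / pn`. Since `K` is finite over `ℚ_p`, the value
group of `K` is generated by `ord π`, so the monomials `a α^i` (`a ∈ K`, `i < pn`) have pairwise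
distinct valuations. Hence `1, α, …, α^{pn-1}` is a basis of `L` whose coordinates are integral
exactly on `O_L`, every value of `L` is a multiple of `ord α`, and `α` is a uniformizer; the same
holds for any other uniformizer `τ`.

If moreover `τ^{pn} = c ∈ K`, compare the differents computed from `α` and from `τ`: writing
`α = f(τ)` and `τ = e(α)` with integral `f, e`, every integral polynomial killing `τ` is an
integral multiple of `h = X^{pn} - c`, so the chain rule applied to `g ∘ f` and to `e ∘ f - X`
shows that `f'(τ)` is a unit and that `g'(α)` divides `h'(τ) = pn τ^{pn-1}`. But
`ord (pn τ^{pn-1}) ≥ ord π + (pn-1) ord τ > ord π = ord g'(α)`.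
-/

open Polynomial

namespace Valuation

theorem map_sum_eq_sup'_of_injOn {R Γ₀ : Type*} [Ring R] [LinearOrderedCommMonoidWithZero Γ₀]
    (v : Valuation R Γ₀) {ι : Type*} {s : Finset ι} (hs : s.Nonempty) {f : ι → R}
    (hf : Set.InjOn (fun i => v (f i)) {i | i ∈ s ∧ v (f i) ≠ 0}) :
    v (∑ i ∈ s, f i) = s.sup' hs fun i => v (f i) := by
  classical
  obtain ⟨j, hj, hmax⟩ := s.exists_mem_eq_sup' hs fun i => v (f i)
  have hle : ∀ i ∈ s, v (f i) ≤ v (f j) := fun i hi => hmax ▸ s.le_sup' (fun i => v (f i)) hi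
  rw [hmax]
  by_cases hj0 : v (f j) = 0
  · exact le_antisymm (hj0 ▸ v.map_sum_le fun i hi => hj0 ▸ hle i hi) (hj0 ▸ zero_le)
  refine v.map_sum_eq_of_lt hj fun i hi => ?_
  obtain ⟨his, hij⟩ := Finset.mem_sdiff.1 hi
  refine (hle i his).lt_of_ne fun heq => hij (Finset.mem_singleton.2 ?_)
  exact hf ⟨his, heq ▸ hj0⟩ ⟨hj, hj0⟩ heq

section Field

variable {K Γ₀ : Type*} [Field K] [LinearOrderedCommGroupWithZero Γ₀] (v : Valuation K Γ₀)

theorem exists_pow_eq_map_algebraMap_of_isAlgebraic {F : Type*} [Field F] [Algebra F K] {x : K}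
    (hx : IsAlgebraic F x) (hx0 : x ≠ 0) :
    ∃ k : ℕ, 0 < k ∧ ∃ c : F, v x ^ k = v (algebraMap F K c) := by
  obtain ⟨P, hP0, hPx⟩ := hx
  set t : ℕ → Γ₀ := fun i => v (algebraMap F K (P.coeff i) * x ^ i) with ht
  -- a vanishing sum has two distinct terms of the same valuation
  have hcoll : ¬ Set.InjOn t {i | i ∈ Finset.range (P.natDegree + 1) ∧ t i ≠ 0} := by
    intro hinj
    have hsum := v.map_sum_eq_sup'_of_injOn Finset.nonempty_range_add_one hinj
    have hPx' : ∑ i ∈ Finset.range (P.natDegree + 1), algebraMap F K (P.coeff i) * x ^ i = 0 := by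
      simpa only [aeval_eq_sum_range, Algebra.smul_def] using hPx
    rw [hPx', map_zero] at hsum
    have hlead : t P.natDegree ≠ 0 := by simp [ht, hP0, hx0]
    exact hlead (le_antisymm (hsum ▸ Finset.le_sup' t (Finset.self_mem_range_succ _)) zero_le)
  simp only [Set.InjOn, not_forall] at hcoll
  obtain ⟨i, ⟨-, hi⟩, j, ⟨-, hj⟩, hij, hne⟩ := hcoll
  wlog hlt : j < i generalizing i j
  · exact this j hj i hi hij.symm (Ne.symm hne) (lt_of_le_of_ne (not_lt.1 hlt) hne)
  refine ⟨i - j, Nat.sub_pos_of_lt hlt, P.coeff j / P.coeff i, ?_⟩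
  have hci : v (algebraMap F K (P.coeff i)) ≠ 0 := fun h => hi (by simp [ht, h])
  have hxj : v x ^ j ≠ 0 := fun h => hj (by simp [ht, h])
  simp only [ht, map_mul, map_pow] at hij
  have hxi : v x ^ i = v x ^ (i - j) * v x ^ j := by rw [← pow_add, Nat.sub_add_cancel hlt.le]
  rw [map_div₀, map_div₀, eq_div_iff hci]
  refine mul_right_cancel₀ hxj ?_
  rw [← hij, hxi]
  ac_rfl

theorem exists_eq_zpow_of_pow_eq_zpow {π x : K} (hπ0 : π ≠ 0) (hπ1 : v π < 1)
    (hπ : ∀ y, v y < 1 → v y ≤ v π) {k : ℕ} (hk : 0 < k) {m : ℤ} (h : v x ^ k = v π ^ m) :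
    ∃ m' : ℤ, v x = v π ^ m' := by
  have hvπ : 0 < v π := zero_lt_iff.2 ((map_ne_zero v).2 hπ0)
  have hr0 : 0 ≤ m % k := Int.emod_nonneg m (by omega)
  have hrk : m % k < k := Int.emod_lt_of_pos m (by omega)
  set y := x * π ^ (-(m / k)) with hy
  have hyk : v y ^ k = v π ^ (m % k) := by
    rw [hy, map_mul, map_zpow₀, mul_pow, h, ← zpow_natCast, ← zpow_mul, ← zpow_add₀ hvπ.ne',
      Int.emod_def]
    ring_nf
  refine ⟨m / k, ?_⟩
  rcases hr0.eq_or_lt with hr | hr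
  · have hy1 : v y = 1 := (pow_eq_one_iff.1 (by rw [hyk, ← hr, zpow_zero])).resolve_right hk.ne'
    rwa [hy, map_mul, map_zpow₀, zpow_neg, mul_inv_eq_one₀ (zpow_ne_zero _ hvπ.ne')] at hy1
  · -- otherwise `v π < v y < 1`
    exfalso
    have hy1 : v y < 1 := by
      by_contra! hge
      exact (one_le_pow₀ hge).not_gt (hyk ▸ zpow_lt_one₀ hvπ hπ1 hr)
    have := pow_le_pow_left₀ zero_le (hπ y hy1) k
    rw [hyk, ← zpow_natCast] at this
    exact this.not_gt (zpow_lt_zpow_right_of_lt_one₀ hvπ hπ1 hrk)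

end Field

section Padic

variable {K Γ₀ : Type*} [Field K] [LinearOrderedCommGroupWithZero Γ₀] {p : ℕ} [Fact p.Prime]
  [Algebra ℚ_[p] K] {v : Valuation K Γ₀}

theorem map_algebraMap_le_of_norm_le
    (hpadic : ∀ x : ℚ_[p], v (algebraMap ℚ_[p] K x) ≤ 1 ↔ ‖x‖ ≤ 1) {c d : ℚ_[p]} (hd : d ≠ 0)
    (h : ‖c‖ ≤ ‖d‖) : v (algebraMap ℚ_[p] K c) ≤ v (algebraMap ℚ_[p] K d) := by
  have hcd : v (algebraMap ℚ_[p] K (c / d)) ≤ 1 :=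
    (hpadic _).2 (by rwa [norm_div, div_le_one (norm_pos_iff.2 hd)])
  rwa [map_div₀, map_div₀, div_le_one₀ (zero_lt_iff.2 (by simpa using hd))] at hcd

theorem map_algebraMap_eq_zpow (hpadic : ∀ x : ℚ_[p], v (algebraMap ℚ_[p] K x) ≤ 1 ↔ ‖x‖ ≤ 1)
    {c : ℚ_[p]} (hc : c ≠ 0) : v (algebraMap ℚ_[p] K c) = v (p : K) ^ c.valuation := by
  have hp : (p : ℚ_[p]) ≠ 0 := Nat.cast_ne_zero.2 (Fact.out : p.Prime).ne_zero
  have hnorm : ‖c‖ = ‖(p : ℚ_[p]) ^ c.valuation‖ := by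
    rw [Padic.norm_eq_zpow_neg_valuation hc, norm_zpow, Padic.norm_p, inv_zpow, zpow_neg]
  rw [← map_natCast (algebraMap ℚ_[p] K), ← map_zpow₀, ← map_zpow₀]
  exact le_antisymm (map_algebraMap_le_of_norm_le hpadic (zpow_ne_zero _ hp) hnorm.le)
    (map_algebraMap_le_of_norm_le hpadic hc hnorm.ge)

theorem map_natCast_le_one (hpadic : ∀ x : ℚ_[p], v (algebraMap ℚ_[p] K x) ≤ 1 ↔ ‖x‖ ≤ 1)
    (m : ℕ) : v (m : K) ≤ 1 := by
  simpa using (hpadic m).2 (by exact_mod_cast Padic.norm_int_le_one (m : ℤ))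

theorem map_prime_lt_one (hpadic : ∀ x : ℚ_[p], v (algebraMap ℚ_[p] K x) ≤ 1 ↔ ‖x‖ ≤ 1) :
    v (p : K) < 1 := by
  refine (map_natCast_le_one hpadic p).lt_of_ne fun h => ?_
  have := (hpadic (p : ℚ_[p])⁻¹).1 (by simp [h])
  rw [norm_inv, Padic.norm_p, inv_inv] at this
  exact this.not_gt (by exact_mod_cast (Fact.out : p.Prime).one_lt)

theorem map_prime_ne_zero : v (p : K) ≠ 0 := by
  have : CharZero K := charZero_of_injective_algebraMap (algebraMap ℚ_[p] K).injective
  simpa using (Fact.out : p.Prime).ne_zero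

theorem ne_zero_of_forall_lt_one_le
    (hpadic : ∀ x : ℚ_[p], v (algebraMap ℚ_[p] K x) ≤ 1 ↔ ‖x‖ ≤ 1) {π : K}
    (hπ : ∀ y, v y < 1 → v y ≤ v π) : π ≠ 0 := by
  rintro rfl
  have := hπ _ (map_prime_lt_one hpadic)
  rw [map_zero, le_zero_iff] at this
  exact map_prime_ne_zero this

theorem exists_eq_zpow_of_padic [FiniteDimensional ℚ_[p] K]
    (hpadic : ∀ x : ℚ_[p], v (algebraMap ℚ_[p] K x) ≤ 1 ↔ ‖x‖ ≤ 1) {π : K} (hπ1 : v π < 1)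
    (hπ : ∀ y, v y < 1 → v y ≤ v π) {x : K} (hx : x ≠ 0) : ∃ m : ℤ, v x = v π ^ m := by
  have hpow : ∀ y : K, y ≠ 0 → ∃ k : ℕ, 0 < k ∧ ∃ m : ℤ, v y ^ k = v (p : K) ^ m := by
    intro y hy
    obtain ⟨k, hk, c, hc⟩ := v.exists_pow_eq_map_algebraMap_of_isAlgebraic
      (Algebra.IsAlgebraic.isAlgebraic (R := ℚ_[p]) y) hy
    have hc0 : c ≠ 0 := by rintro rfl; simp [hy] at hc
    exact ⟨k, hk, c.valuation, hc.trans (map_algebraMap_eq_zpow hpadic hc0)⟩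
  have hπ0 := ne_zero_of_forall_lt_one_le hpadic hπ
  have hp1 := map_prime_lt_one hpadic
  obtain ⟨k, hk, m, hm⟩ := hpow π hπ0
  have hm0 : 0 < m := by
    by_contra! hm0
    exact (pow_lt_one₀ zero_le hπ1 hk.ne').not_ge
      (hm ▸ one_le_zpow_of_nonpos₀ (zero_lt_iff.2 map_prime_ne_zero) hp1.le hm0)
  obtain ⟨s, hs⟩ := v.exists_eq_zpow_of_pow_eq_zpow hπ0 hπ1 hπ (by omega : 0 < m.toNat)
    (m := k) (by rw [← zpow_natCast, Int.toNat_of_nonneg hm0.le, ← hm, zpow_natCast])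
  obtain ⟨k', hk', m', hm'⟩ := hpow x hx
  exact v.exists_eq_zpow_of_pow_eq_zpow hπ0 hπ1 hπ hk' (m := s * m') (by rw [hm', hs, zpow_mul])

end Padic

@[simp]
theorem algebraMap_integer_apply {K L Γ₀ : Type*} [Field K] [Ring L] [Algebra K L]
    [LinearOrderedCommGroupWithZero Γ₀] {v : Valuation K Γ₀} (x : v.integer) :
    algebraMap v.integer L x = algebraMap K L x :=
  rfl

end Valuation

section Extension

variable {K L Γ₀ : Type*} [Field K] [Field L] [Algebra K L] [LinearOrderedCommGroupWithZero Γ₀]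
  {v : Valuation K Γ₀} {vL : Valuation L Γ₀} {π : K} {N : ℕ} {w : L}

theorem exists_valuation_mul_pow_eq_zpow (hcomp : ∀ x, vL (algebraMap K L x) = v x)
    (hdisc : ∀ x : K, x ≠ 0 → ∃ m : ℤ, v x = v π ^ m) (hw0 : w ≠ 0) (hw : vL w ^ N = v π)
    {b : K} (hb : b ≠ 0) (i : ℕ) :
    ∃ m : ℤ, vL (algebraMap K L b * w ^ i) = vL w ^ (N * m + i : ℤ) := by
  obtain ⟨m, hm⟩ := hdisc b hb
  refine ⟨m, ?_⟩
  rw [map_mul, hcomp, hm, ← hw, map_pow, zpow_add₀ ((map_ne_zero vL).2 hw0), zpow_mul,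
    zpow_natCast, zpow_natCast]

theorem valuation_sum_mul_pow_eq_sup' (hcomp : ∀ x, vL (algebraMap K L x) = v x)
    (hdisc : ∀ x : K, x ≠ 0 → ∃ m : ℤ, v x = v π ^ m) (hw0 : w ≠ 0) (hw1 : vL w < 1)
    (hw : vL w ^ N = v π) (hN : 0 < N) (a : Fin N → K) :
    vL (∑ i, algebraMap K L (a i) * w ^ (i : ℕ)) =
      Finset.univ.sup' ⟨⟨0, hN⟩, Finset.mem_univ _⟩
        fun i => vL (algebraMap K L (a i) * w ^ (i : ℕ)) := by
  refine vL.map_sum_eq_sup'_of_injOn _ ?_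
  rintro i ⟨-, hi⟩ j ⟨-, hj⟩ hij
  have ha : ∀ k, vL (algebraMap K L (a k) * w ^ (k : ℕ)) ≠ 0 → a k ≠ 0 := by
    intro k hk h0
    simp [h0] at hk
  obtain ⟨mi, hmi⟩ := exists_valuation_mul_pow_eq_zpow hcomp hdisc hw0 hw (ha i hi) i
  obtain ⟨mj, hmj⟩ := exists_valuation_mul_pow_eq_zpow hcomp hdisc hw0 hw (ha j hj) j
  have hexp : (N * mi + i : ℤ) = N * mj + j :=
    zpow_right_injective₀ (zero_lt_iff.2 ((map_ne_zero vL).2 hw0)) hw1.ne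
      (by simp only [← hmi, ← hmj, hij])
  have := congrArg (· % (N : ℤ)) hexp
  simp only [Int.mul_add_emod_self_left, Int.emod_eq_of_lt, Nat.cast_nonneg, Nat.cast_lt,
    Fin.is_lt, Nat.cast_inj] at this
  exact Fin.ext this

theorem linearIndependent_pow_of_valuation_pow_eq (hcomp : ∀ x, vL (algebraMap K L x) = v x)
    (hdisc : ∀ x : K, x ≠ 0 → ∃ m : ℤ, v x = v π ^ m) (hw0 : w ≠ 0) (hw1 : vL w < 1)
    (hw : vL w ^ N = v π) : LinearIndependent K fun i : Fin N => w ^ (i : ℕ) := by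
  rcases N.eq_zero_or_pos with rfl | hN
  · exact linearIndependent_empty_type
  refine Fintype.linearIndependent_iff.2 fun a ha i => ?_
  simp only [Algebra.smul_def] at ha
  have hle := Finset.le_sup' (fun i => vL (algebraMap K L (a i) * w ^ (i : ℕ))) (Finset.mem_univ i)
  rw [← valuation_sum_mul_pow_eq_sup' hcomp hdisc hw0 hw1 hw hN, ha, map_zero, le_zero_iff] at hle
  simpa [hw0] using hle

theorem exists_sum_mul_pow_eq (hli : LinearIndependent K fun i : Fin N => w ^ (i : ℕ))
    (hrank : Module.finrank K L = N) (hN : 0 < N) (z : L) :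
    ∃ a : Fin N → K, ∑ i, algebraMap K L (a i) * w ^ (i : ℕ) = z := by
  have : Nonempty (Fin N) := ⟨⟨0, hN⟩⟩
  have hspan := hli.span_eq_top_of_card_eq_finrank (by rw [Fintype.card_fin, hrank])
  simpa only [Algebra.smul_def] using
    (Submodule.mem_span_range_iff_exists_fun K).1 (hspan ▸ Submodule.mem_top (x := z) :
      z ∈ Submodule.span K (Set.range fun i : Fin N => w ^ (i : ℕ)))

theorem valuation_coeff_le_one_of_sum_mul_pow (hcomp : ∀ x, vL (algebraMap K L x) = v x)
    (hdisc : ∀ x : K, x ≠ 0 → ∃ m : ℤ, v x = v π ^ m) (hπ : ∀ y, v y < 1 → v y ≤ v π)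
    (hw0 : w ≠ 0) (hw1 : vL w < 1) (hw : vL w ^ N = v π) (hN : 0 < N) {a : Fin N → K}
    (ha : vL (∑ i, algebraMap K L (a i) * w ^ (i : ℕ)) ≤ 1) (i : Fin N) : v (a i) ≤ 1 := by
  have hterm : v (a i) * vL w ^ (i : ℕ) ≤ 1 := by
    rw [← hcomp, ← map_pow, ← map_mul]
    rw [valuation_sum_mul_pow_eq_sup' hcomp hdisc hw0 hw1 hw hN] at ha
    exact (Finset.le_sup' (fun i => vL (algebraMap K L (a i) * w ^ (i : ℕ)))
      (Finset.mem_univ i)).trans ha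
  by_contra! hlt
  -- `(a i)⁻¹` is then a non-unit, so `vL w ^ i ≤ v (a i)⁻¹ ≤ v π = vL w ^ N` with `i < N`
  have hinv : v (a i)⁻¹ ≤ vL w ^ N :=
    hw ▸ hπ _ (by rw [map_inv₀]; exact inv_lt_one_of_one_lt₀ hlt)
  have hi : vL w ^ (i : ℕ) ≤ vL w ^ N := by
    refine le_trans ?_ hinv
    rwa [map_inv₀, ← mul_one (v (a i))⁻¹, le_inv_mul_iff₀ (zero_lt_one.trans hlt)]
  exact hi.not_gt (pow_lt_pow_right_of_lt_one₀ (zero_lt_iff.2 ((map_ne_zero vL).2 hw0)) hw1 i.2)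

theorem exists_valuation_eq_zpow (hcomp : ∀ x, vL (algebraMap K L x) = v x)
    (hdisc : ∀ x : K, x ≠ 0 → ∃ m : ℤ, v x = v π ^ m) (hw0 : w ≠ 0) (hw1 : vL w < 1)
    (hw : vL w ^ N = v π) (hrank : Module.finrank K L = N) (hN : 0 < N) {z : L} (hz : z ≠ 0) :
    ∃ k : ℤ, vL z = vL w ^ k := by
  obtain ⟨a, rfl⟩ := exists_sum_mul_pow_eq
    (linearIndependent_pow_of_valuation_pow_eq hcomp hdisc hw0 hw1 hw) hrank hN z
  obtain ⟨i, -, hi⟩ := Finset.univ.exists_mem_eq_sup' ⟨⟨0, hN⟩, Finset.mem_univ _⟩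
    fun i => vL (algebraMap K L (a i) * w ^ (i : ℕ))
  have hsum := (valuation_sum_mul_pow_eq_sup' hcomp hdisc hw0 hw1 hw hN a).trans hi
  have hai : a i ≠ 0 := fun h => hz ((map_eq_zero vL).1 (by simp [hsum, h]))
  obtain ⟨m, hm⟩ := exists_valuation_mul_pow_eq_zpow hcomp hdisc hw0 hw hai i
  exact ⟨_, hsum.trans hm⟩

theorem valuation_le_of_valuation_lt_one (hcomp : ∀ x, vL (algebraMap K L x) = v x)
    (hdisc : ∀ x : K, x ≠ 0 → ∃ m : ℤ, v x = v π ^ m) (hw0 : w ≠ 0) (hw1 : vL w < 1)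
    (hw : vL w ^ N = v π) (hrank : Module.finrank K L = N) (hN : 0 < N) {z : L}
    (hz : vL z < 1) : vL z ≤ vL w := by
  rcases eq_or_ne z 0 with rfl | hz0
  · simp
  obtain ⟨k, hk⟩ := exists_valuation_eq_zpow hcomp hdisc hw0 hw1 hw hrank hN hz0
  have hw0' : 0 < vL w := zero_lt_iff.2 ((map_ne_zero vL).2 hw0)
  rw [hk] at hz ⊢
  have hk1 : 1 ≤ k := (zpow_lt_one_iff_right_of_lt_one₀ hw0' hw1).1 hz
  simpa using zpow_le_zpow_right_of_le_one₀ hw0' hw1.le hk1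

end Extension

theorem finrank_eq_of_adjoin_eq_top {K L : Type*} [Field K] [Field L] [Algebra K L] {α : L}
    (hgen : Algebra.adjoin K {α} = ⊤) {N : ℕ}
    (hli : LinearIndependent K fun i : Fin N => α ^ (i : ℕ)) {g : K[X]} (hg0 : g ≠ 0)
    (hgα : aeval α g = 0) (hgN : g.natDegree ≤ N) : Module.finrank K L = N := by
  have hint : IsIntegral K α := isAlgebraic_iff_isIntegral.1 ⟨g, hg0, hgα⟩
  have hmin : Module.finrank K L = (minpoly K α).natDegree := by
    rw [← IntermediateField.finrank_top', ← IntermediateField.adjoin_eq_top_of_algebra K {α} hgen,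
      IntermediateField.adjoin.finrank hint]
  have : Module.Finite K L := Module.finite_of_finrank_pos (hmin ▸ minpoly.natDegree_pos hint)
  refine le_antisymm ?_ (by simpa using hli.fintype_card_le_finrank)
  exact hmin ▸ (natDegree_le_of_dvd (minpoly.dvd K α hgα) hg0).trans hgN

theorem X_pow_sub_C_dvd_of_aeval_eq_zero {R K L : Type*} [CommRing R] [Nontrivial R]
    [CommRing K] [CommRing L] [Algebra R K] [Algebra K L] [Algebra R L] [IsScalarTower R K L]
    (hR : Function.Injective (algebraMap R K)) {N : ℕ} (hN : N ≠ 0) {τ : L}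
    (hli : LinearIndependent K fun i : Fin N => τ ^ (i : ℕ)) {c : R}
    (hc : algebraMap R L c = τ ^ N) {P : R[X]} (hP : aeval τ P = 0) : X ^ N - C c ∣ P := by
  have hmon : (X ^ N - C c).Monic := monic_X_pow_sub_C c hN
  refine (modByMonic_eq_zero_iff_dvd hmon).1 ?_
  set r := P %ₘ (X ^ N - C c) with hr
  have hrτ : aeval τ r = 0 := by rw [hr, modByMonic_eq_sub_mul_div]; simp [hP, hc]
  have hdeg : r.natDegree < N := by
    have hne : X ^ N - C c ≠ 1 := fun h => hN <| by
      simpa [h] using (natDegree_X_pow_sub_C (n := N) (r := c)).symm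
    have := natDegree_modByMonic_lt P hmon hne
    rwa [natDegree_X_pow_sub_C] at this
  have hsum : ∑ i : Fin N, algebraMap R K (r.coeff i) • τ ^ (i : ℕ) = 0 := by
    rw [← hrτ, aeval_eq_sum_range' hdeg,
      ← Fin.sum_univ_eq_sum_range (fun i : ℕ => r.coeff i • τ ^ i)]
    simp only [algebraMap_smul]
  have hcoeff := Fintype.linearIndependent_iff.1 hli _ hsum
  ext i
  rcases lt_or_ge i N with hi | hi
  · exact hR (by simpa using hcoeff ⟨i, hi⟩)
  · exact coeff_eq_zero_of_natDegree_lt (hdeg.trans_le hi)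

section Integral

variable {K L Γ₀ : Type*} [Field K] [Field L] [Algebra K L] [LinearOrderedCommGroupWithZero Γ₀]
  {v : Valuation K Γ₀} {vL : Valuation L Γ₀}

theorem valuation_aeval_le_one (hcomp : ∀ x, vL (algebraMap K L x) = v x) (f : v.integer[X])
    {z : L} (hz : vL z ≤ 1) : vL (aeval z f) ≤ 1 := by
  rw [aeval_eq_sum_range]
  refine vL.map_sum_le fun i _ => ?_
  rw [Algebra.smul_def, map_mul, Valuation.algebraMap_integer_apply, hcomp, map_pow]
  exact mul_le_one' (f.coeff i).2 (pow_le_one' hz i)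

theorem exists_aeval_eq (hcomp : ∀ x, vL (algebraMap K L x) = v x) {π : K}
    (hdisc : ∀ x : K, x ≠ 0 → ∃ m : ℤ, v x = v π ^ m) (hπ : ∀ y, v y < 1 → v y ≤ v π) {N : ℕ}
    {w : L} (hw0 : w ≠ 0) (hw1 : vL w < 1) (hw : vL w ^ N = v π)
    (hrank : Module.finrank K L = N) (hN : 0 < N) {z : L} (hz : vL z ≤ 1) :
    ∃ f : v.integer[X], aeval w f = z := by
  obtain ⟨a, rfl⟩ := exists_sum_mul_pow_eq
    (linearIndependent_pow_of_valuation_pow_eq hcomp hdisc hw0 hw1 hw) hrank hN z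
  have ha := valuation_coeff_le_one_of_sum_mul_pow hcomp hdisc hπ hw0 hw1 hw hN hz
  exact ⟨∑ i : Fin N, monomial (i : ℕ) ⟨a i, ha i⟩, by simp⟩

theorem valuation_aeval_derivative_le (hcomp : ∀ x, vL (algebraMap K L x) = v x) {α τ : L}
    (hα : vL α ≤ 1) (hτ : vL τ ≤ 1) {f e g h : v.integer[X]} (hf : aeval τ f = α)
    (he : aeval α e = τ) (hg : aeval α g = 0) (hh : aeval τ h = 0)
    (hdvd : ∀ P : v.integer[X], aeval τ P = 0 → h ∣ P) :
    vL (aeval α (derivative g)) ≤ vL (aeval τ (derivative h)) := by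
  have hder : ∀ P : v.integer[X], aeval τ P = 0 →
      vL (aeval τ (derivative P)) ≤ vL (aeval τ (derivative h)) := by
    intro P hP
    obtain ⟨q, rfl⟩ := hdvd P hP
    rw [derivative_mul, map_add, map_mul, map_mul, hh, zero_mul, add_zero, map_mul]
    exact mul_le_of_le_one_right' (valuation_aeval_le_one hcomp q hτ)
  have hgf := hder (g.comp f) (by rw [aeval_comp, hf, hg])
  have hef := hder (e.comp f - X) (by rw [map_sub, aeval_comp, hf, he, aeval_X, sub_self])
  rw [derivative_comp, map_mul, aeval_comp, hf, map_mul] at hgf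
  rw [derivative_sub, derivative_comp, derivative_X, map_sub, map_mul, aeval_comp, hf,
    map_one] at hef
  rcases lt_or_ge (vL (aeval τ (derivative h))) 1 with hlt | hge
  · have hunit : vL (aeval τ (derivative f) * aeval α (derivative e)) = 1 := by
      have := vL.map_add_eq_of_lt_left (x := 1)
        (y := aeval τ (derivative f) * aeval α (derivative e) - 1)
        (by rw [map_one]; exact hef.trans_lt hlt)
      rwa [add_sub_cancel, map_one] at this
    have hf1 : vL (aeval τ (derivative f)) = 1 := by
      refine le_antisymm (valuation_aeval_le_one hcomp _ hτ) ?_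
      rw [← hunit, map_mul]
      exact mul_le_of_le_one_right' (valuation_aeval_le_one hcomp _ hα)
    rwa [hf1, one_mul] at hgf
  · exact (valuation_aeval_le_one hcomp _ hα).trans hge

end Integral

section Eisenstein

variable {K L Γ₀ : Type*} [Field K] [Field L] [Algebra K L] [LinearOrderedCommGroupWithZero Γ₀]
  {v : Valuation K Γ₀} {vL : Valuation L Γ₀} {π : K} {N : ℕ}

theorem valuation_lt_one_and_pow_eq_of_eisenstein (hcomp : ∀ x, vL (algebraMap K L x) = v x)
    (hπ0 : π ≠ 0) (hπ1 : v π < 1) (hN : N ≠ 0) {α : L}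
    (hroot : α ^ N + algebraMap K L π * α + algebraMap K L π = 0) :
    vL α < 1 ∧ vL α ^ N = v π := by
  have hpow : vL α ^ N = vL (algebraMap K L π * α + algebraMap K L π) := by
    rw [add_assoc] at hroot
    rw [← map_pow, eq_neg_of_add_eq_zero_left hroot, Valuation.map_neg]
  have hα1 : vL α < 1 := by
    by_contra! h1
    have hle : vL (algebraMap K L π * α + algebraMap K L π) ≤ v π * vL α := by
      refine (vL.map_add _ _).trans (max_le (by rw [map_mul, hcomp]) ?_)
      rw [hcomp]
      exact le_mul_of_one_le_right' h1
    exact ((le_self_pow₀ h1 hN).trans (hpow ▸ hle)).not_gt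
      (mul_lt_of_lt_one_left (zero_lt_one.trans_le h1) hπ1)
  refine ⟨hα1, hpow.trans ?_⟩
  rw [vL.map_add_eq_of_lt_right, hcomp]
  rw [map_mul, hcomp]
  exact mul_lt_of_lt_one_right (zero_lt_iff.2 ((map_ne_zero v).2 hπ0)) hα1

theorem valuation_natCast_mul_pow_lt (hcomp : ∀ x, vL (algebraMap K L x) = v x) (hπ0 : π ≠ 0)
    (hN : 2 ≤ N) (hNπ : v (N : K) ≤ v π) {x : L} (hx1 : vL x < 1) :
    vL ((N : L) * x ^ (N - 1)) < v π := by
  rw [map_mul, ← map_natCast (algebraMap K L), hcomp, map_pow]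
  calc v (N : K) * vL x ^ (N - 1) ≤ v π * vL x ^ (N - 1) := mul_le_mul_left hNπ _
    _ < v π := mul_lt_of_lt_one_right (zero_lt_iff.2 ((map_ne_zero v).2 hπ0))
      (pow_lt_one₀ zero_le hx1 (by omega))

theorem algebraMap_ne_pow_of_valuation_derivative_eq (hcomp : ∀ x, vL (algebraMap K L x) = v x)
    (hdisc : ∀ x : K, x ≠ 0 → ∃ m : ℤ, v x = v π ^ m) (hπ : ∀ y, v y < 1 → v y ≤ v π)
    (hπ0 : π ≠ 0) (hrank : Module.finrank K L = N) (hN : 2 ≤ N) (hNπ : v (N : K) ≤ v π)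
    {α τ : L} (hα0 : α ≠ 0) (hα1 : vL α < 1) (hα : vL α ^ N = v π) (hτ : vL τ = vL α)
    {g : v.integer[X]} (hg : aeval α g = 0) (hg' : vL (aeval α (derivative g)) = v π) (c : K) :
    algebraMap K L c ≠ τ ^ N := by
  intro hc
  have hτ0 : τ ≠ 0 := by
    rintro rfl
    exact hα0 ((map_eq_zero vL).1 (by rw [← hτ, map_zero]))
  have hτ1 : vL τ < 1 := hτ ▸ hα1
  have hτN : vL τ ^ N = v π := hτ ▸ hα
  have hc1 : v c ≤ 1 := by
    rw [← hcomp, hc, map_pow]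
    exact pow_le_one₀ zero_le hτ1.le
  set c' : v.integer := ⟨c, hc1⟩
  have hc' : algebraMap v.integer L c' = τ ^ N := hc
  have hdvd := fun (P : v.integer[X]) (hP : aeval τ P = 0) =>
    X_pow_sub_C_dvd_of_aeval_eq_zero Subtype.val_injective (by omega)
      (linearIndependent_pow_of_valuation_pow_eq hcomp hdisc hτ0 hτ1 hτN) hc' hP
  obtain ⟨f, hf⟩ := exists_aeval_eq hcomp hdisc hπ hτ0 hτ1 hτN hrank (by omega) hα1.le
  obtain ⟨e, he⟩ := exists_aeval_eq hcomp hdisc hπ hα0 hα1 hα hrank (by omega) hτ1.le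
  have hle := valuation_aeval_derivative_le hcomp hα1.le hτ1.le hf he hg (by simp [hc']) hdvd
  have hlt : vL (aeval τ (derivative (X ^ N - C c'))) < v π := by
    rw [derivative_sub, derivative_C, sub_zero, derivative_X_pow, map_mul, aeval_C, map_pow,
      aeval_X, map_natCast]
    exact valuation_natCast_mul_pow_lt hcomp hπ0 hN hNπ hτ1
  exact (hle.trans_lt hlt).ne hg'

end Eisenstein

/-- Let `K` be a `p`-adic field with uniformizer `π` and `n ≥ 1`.
Let `α` be a root of the Eisenstein polynomial `g(x) = x^{pn} + πx + π`, and let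
`L = K[α]`.  Then `L/K` is totally ramified of degree `pn` (expressed by
`finrank K L = pn` together with `α` being a uniformizer of `L` whose `pn`-th
power has the valuation of `π`), `ord (g'(α)) = ord π`, and there is no
uniformizer `τ` of `L` with `τ^{pn} ∈ K`. -/
theorem eisenstein_no_good_uniformizer
    {K L : Type*} [Field K] [Field L] {Γ₀ : Type*} [LinearOrderedCommGroupWithZero Γ₀]
    (p : ℕ) [Fact p.Prime] [Algebra ℚ_[p] K] [FiniteDimensional ℚ_[p] K]
    [Algebra K L]
    (vK : Valuation K Γ₀) (vL : Valuation L Γ₀)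
    (hcomp : ∀ x : K, vL (algebraMap K L x) = vK x)
    (hpadic : ∀ x : ℚ_[p], vK (algebraMap ℚ_[p] K x) ≤ 1 ↔ ‖x‖ ≤ 1)
    (π : K) (hπ : vK π < 1 ∧ ∀ x : K, vK x < 1 → vK x ≤ vK π)
    (n : ℕ) (hn : 0 < n)
    (α : L) (hroot : α ^ (p * n) + algebraMap K L π * α + algebraMap K L π = 0)
    (hgen : Algebra.adjoin K {α} = ⊤) :
    -- `L = K[α]` has degree `pn` over `K` …
    (Module.finrank K L = p * n) ∧
    -- … and is totally ramified: `α` is a uniformizer of `L` and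
    -- `ord π = pn · ord α`
    ((vL α < 1 ∧ ∀ z : L, vL z < 1 → vL z ≤ vL α) ∧
      vL (algebraMap K L π) = (vL α) ^ (p * n)) ∧
    -- `ord (g'(α)) = ord π`, where `g'(x) = pn·x^{pn-1} + π`
    (vL ((p * n : ℕ) * α ^ (p * n - 1) + algebraMap K L π) = vL (algebraMap K L π)) ∧
    -- no uniformizer `τ` of `L` satisfies `τ^{pn} ∈ K`
    (¬ ∃ τ : L, (vL τ < 1 ∧ ∀ z : L, vL z < 1 → vL z ≤ vL τ) ∧
        τ ^ (p * n) ∈ Set.range (algebraMap K L)) := by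
  have hN : 2 ≤ p * n := Nat.mul_le_mul (Fact.out : p.Prime).two_le hn
  have hπ0 := Valuation.ne_zero_of_forall_lt_one_le hpadic hπ.2
  have hdisc := fun x (hx : x ≠ 0) => Valuation.exists_eq_zpow_of_padic hpadic hπ.1 hπ.2 hx
  have hNπ : vK ((p * n : ℕ) : K) ≤ vK π := by
    rw [Nat.cast_mul, map_mul]
    exact (mul_le_of_le_one_right' (Valuation.map_natCast_le_one hpadic n)).trans
      (hπ.2 _ (Valuation.map_prime_lt_one hpadic))
  obtain ⟨hα1, hα⟩ := valuation_lt_one_and_pow_eq_of_eisenstein hcomp hπ0 hπ.1 (by omega) hroot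
  have hα0 : α ≠ 0 := by
    rintro rfl
    exact hπ0 ((map_eq_zero vK).1 (by rw [← hα, map_zero, zero_pow (by omega)]))
  have hrank : Module.finrank K L = p * n :=
    finrank_eq_of_adjoin_eq_top hgen (g := X ^ (p * n) + (C π * X + C π))
      (linearIndependent_pow_of_valuation_pow_eq hcomp hdisc hα0 hα1 hα)
      (monic_X_pow_add (degree_linear_le.trans_lt (by exact_mod_cast hN))).ne_zero
      (by simp [← add_assoc, hroot]) (by compute_degree; omega)
  have hunif z (hz : vL z < 1) : vL z ≤ vL α :=
    valuation_le_of_valuation_lt_one hcomp hdisc hα0 hα1 hα hrank (by omega) hz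
  have hder : vL ((p * n : ℕ) * α ^ (p * n - 1) + algebraMap K L π) = vL (algebraMap K L π) :=
    vL.map_add_eq_of_lt_right (hcomp π ▸ valuation_natCast_mul_pow_lt hcomp hπ0 hN hNπ hα1)
  refine ⟨hrank, ⟨⟨hα1, hunif⟩, by rw [hcomp, hα]⟩, hder, ?_⟩
  rintro ⟨τ, ⟨hτ1, hτ⟩, c, hc⟩
  set g : vK.integer[X] := X ^ (p * n) + (C ⟨π, hπ.1.le⟩ * X + C ⟨π, hπ.1.le⟩)
  have hg : aeval α g = 0 := by simpa [g, ← add_assoc] using hroot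
  have hg' : vL (aeval α (derivative g)) = vK π := by
    rw [← hcomp, ← hder]
    simp [g, derivative_X_pow]
  exact algebraMap_ne_pow_of_valuation_derivative_eq hcomp hdisc hπ.2 hπ0 hrank hN hNπ hα0 hα1 hα
    (le_antisymm (hunif τ hτ1) (hτ α hα1)) hg hg' c hc
end

section
/- Consider the function f : ℚ₃ → ℚ₃ defined by f(x) = 1/x if x ≠ 0 and (∀y ∈ K)(y² ≠ −1), and f(x) = 0 otherwise, interpreted both in K = ℚ₃ and in L = ℚ₃(√−1). Then −1 is not a square in ℚ₃ but is a square in ℚ₃(√−1); consequently ∫_{|x|≤1} |f(x)|_K^s dx over ℚ₃ is finite iff s < 1 (so the local index at 0 is 1), while f is identically 0 on ℚ₃(√−1), so ∫ |f|_L^s dx = 0 for all s (local index ∞). In particular the index at 0 strictly increases under the field extension ℚ₃ ≤ ℚ₃(√−1). -/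
set_option linter.unusedSectionVars false


open MeasureTheory Polynomial
open scoped ENNReal

namespace DescentAux

variable [MeasurableSpace ℚ_[3]] [BorelSpace ℚ_[3]]

noncomputable def Bset (n : ℕ) : Set ℚ_[3] := {x | ‖x‖ ≤ (3:ℝ)⁻¹ ^ n}

lemma measurable_Bset (n : ℕ) : MeasurableSet (Bset n) :=
  (isClosed_le continuous_norm continuous_const).measurableSet

lemma norm_three : ‖(3 : ℚ_[3])‖ = (3:ℝ)⁻¹ := by
  have := Padic.norm_p (p := 3)
  simpa using this

lemma norm_three_pow (n : ℕ) : ‖(3 : ℚ_[3])^n‖ = (3:ℝ)⁻¹ ^ n := by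
  rw [norm_pow, norm_three]

noncomputable def Tset (n : ℕ) (i : Fin 3) : Set ℚ_[3] :=
  {x | ‖x - ((i:ℕ) : ℚ_[3]) * 3 ^ n‖ ≤ (3:ℝ)⁻¹ ^ (n+1)}

lemma measurable_Tset (n : ℕ) (i : Fin 3) : MeasurableSet (Tset n i) :=
  (isClosed_le (by fun_prop) continuous_const).measurableSet

lemma cover {n : ℕ} {x : ℚ_[3]} (hx : x ∈ Bset n) : ∃ i : Fin 3, x ∈ Tset n i := by
  have h30 : (3:ℚ_[3]) ≠ 0 := by
    intro h
    have := congrArg norm h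
    rw [norm_three, norm_zero] at this
    norm_num at this
  have h3n : (3:ℚ_[3])^n ≠ 0 := pow_ne_zero _ h30
  have hu : ‖x / 3^n‖ ≤ 1 := by
    rw [norm_div, norm_three_pow, div_le_one (by positivity)]
    simpa [Bset] using hx
  set z : ℤ_[3] := ⟨x / 3^n, hu⟩ with hz
  refine ⟨⟨z.appr 1, by simpa using z.appr_lt 1⟩, ?_⟩
  have hspec : ‖z - (z.appr 1 : ℤ_[3])‖ ≤ (3:ℝ)⁻¹ := by
    have h := (PadicInt.norm_le_pow_iff_mem_span_pow (z - (z.appr 1 : ℤ_[3])) 1).mpr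
      (by simpa using z.appr_spec 1)
    simpa using h
  have hcoe : ‖x / 3^n - ((z.appr 1 : ℕ) : ℚ_[3])‖ ≤ (3:ℝ)⁻¹ := by
    have : ((z - (z.appr 1 : ℤ_[3]) : ℤ_[3]) : ℚ_[3]) = x / 3^n - ((z.appr 1 : ℕ) : ℚ_[3]) := by
      push_cast [hz]
      rfl
    rw [← this, ← PadicInt.norm_def]
    exact hspec
  show ‖x - ((z.appr 1 : ℕ) : ℚ_[3]) * 3 ^ n‖ ≤ (3:ℝ)⁻¹ ^ (n+1)
  have heq : x - ((z.appr 1 : ℕ) : ℚ_[3]) * 3 ^ n = (x / 3^n - ((z.appr 1 : ℕ) : ℚ_[3])) * 3^n := by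
    field_simp
  rw [heq, norm_mul, norm_three_pow, pow_succ, mul_comm ((3:ℝ)⁻¹^n)]
  exact mul_le_mul_of_nonneg_right hcoe (by positivity)

lemma Tset_subset {n : ℕ} {i : Fin 3} : Tset n i ⊆ Bset n := by
  intro x hx
  have hc : ‖((i:ℕ) : ℚ_[3]) * 3 ^ n‖ ≤ (3:ℝ)⁻¹ ^ n := by
    rw [norm_mul, norm_three_pow]
    have : ‖((i:ℕ) : ℚ_[3])‖ ≤ 1 := by
      have := Padic.norm_int_le_one (p := 3) ((i:ℕ) : ℤ)
      simpa using this
    nlinarith [pow_pos (by norm_num : (0:ℝ) < 3⁻¹) n]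
  have hx' : ‖x - ((i:ℕ) : ℚ_[3]) * 3 ^ n‖ ≤ (3:ℝ)⁻¹ ^ n := by
    refine le_trans hx ?_
    rw [pow_succ]
    nlinarith [pow_pos (by norm_num : (0:ℝ) < 3⁻¹) n]
  have := Padic.nonarchimedean (x - ((i:ℕ) : ℚ_[3]) * 3 ^ n) (((i:ℕ) : ℚ_[3]) * 3 ^ n)
  simp only [sub_add_cancel] at this
  exact le_trans this (max_le hx' hc)

lemma Tset_disjoint (n : ℕ) : Pairwise (Function.onFun Disjoint (Tset n)) := by
  intro i j hij
  rw [Function.onFun, Set.disjoint_left]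
  intro x hxi hxj
  have hdiff : ‖(((i:ℕ) : ℚ_[3]) - ((j:ℕ) : ℚ_[3])) * 3 ^ n‖ ≤ (3:ℝ)⁻¹ ^ (n+1) := by
    have heq : (((i:ℕ) : ℚ_[3]) - ((j:ℕ) : ℚ_[3])) * 3 ^ n
        = (x - ((j:ℕ) : ℚ_[3]) * 3 ^ n) + -(x - ((i:ℕ) : ℚ_[3]) * 3 ^ n) := by ring
    rw [heq]
    refine le_trans (Padic.nonarchimedean _ _) (max_le hxj ?_)
    rw [norm_neg]; exact hxi
  have hk : (((i:ℕ) : ℚ_[3]) - ((j:ℕ) : ℚ_[3])) = (((i:ℤ) - (j:ℤ) : ℤ) : ℚ_[3]) := by push_cast; ring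
  have hknorm : ‖(((i:ℤ) - (j:ℤ) : ℤ) : ℚ_[3])‖ = 1 := by
    refine le_antisymm (Padic.norm_int_le_one _) ?_
    by_contra h
    push_neg at h
    have hdvd := (Padic.norm_intCast_lt_one_iff (k := (i:ℤ) - (j:ℤ))).mp h
    have hi := i.isLt; have hj := j.isLt
    have : (i:ℕ) ≠ (j:ℕ) := fun h => hij (Fin.ext h)
    omega
  rw [hk, norm_mul, hknorm, one_mul, norm_three_pow] at hdiff
  have : ((3:ℝ)⁻¹) ^ n ≤ (3:ℝ)⁻¹ ^ (n+1) := hdiff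
  rw [pow_succ] at this
  nlinarith [pow_pos (by norm_num : (0:ℝ) < 3⁻¹) n]

lemma Tset_eq_preimage (n : ℕ) (i : Fin 3) :
    Tset n i = (fun x => x + (-(((i:ℕ) : ℚ_[3]) * 3 ^ n))) ⁻¹' Bset (n+1) := by
  ext x
  simp [Tset, Bset, sub_eq_add_neg]

lemma measure_Bset (μ : Measure ℚ_[3]) [μ.IsAddHaarMeasure]
    (hO : μ {x : ℚ_[3] | ‖x‖ ≤ 1} = 1) (n : ℕ) : μ (Bset n) = (3:ℝ≥0∞)⁻¹ ^ n := by
  induction n with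
  | zero => simpa [Bset] using hO
  | succ n ih =>
    have hunion : Bset n = ⋃ i : Fin 3, Tset n i := by
      ext x
      exact ⟨fun hx => Set.mem_iUnion.mpr (cover hx), fun hx => by
        obtain ⟨i, hi⟩ := Set.mem_iUnion.mp hx; exact Tset_subset hi⟩
    have hT : ∀ i : Fin 3, μ (Tset n i) = μ (Bset (n+1)) := by
      intro i
      rw [Tset_eq_preimage]
      exact measure_preimage_add_right μ _ _
    have h3 : μ (Bset n) = 3 * μ (Bset (n+1)) := by
      rw [hunion, measure_iUnion (Tset_disjoint n) (measurable_Tset n), tsum_fintype]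
      simp [hT]
    rw [ih] at h3
    have : (3:ℝ≥0∞)⁻¹ * ((3:ℝ≥0∞)⁻¹ ^ n) = (3:ℝ≥0∞)⁻¹ * (3 * μ (Bset (n+1))) := by rw [← h3]
    rw [← mul_assoc, ENNReal.inv_mul_cancel (by norm_num) (by norm_num), one_mul] at this
    rw [pow_succ, mul_comm]
    exact this.symm



noncomputable def Aset (n : ℕ) : Set ℚ_[3] := {x | ‖x‖ = (3:ℝ)⁻¹ ^ n}

lemma measurable_Aset (n : ℕ) : MeasurableSet (Aset n) :=
  (isClosed_eq continuous_norm continuous_const).measurableSet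

lemma inv_pow_eq_zpow (n : ℕ) : ((3:ℝ)⁻¹) ^ n = (3:ℝ) ^ (-(n:ℤ)) := by
  rw [inv_pow, ← zpow_natCast, ← zpow_neg]

lemma Aset_eq (n : ℕ) : Aset n = Bset n \ Bset (n+1) := by
  ext x
  simp only [Aset, Bset, Set.mem_setOf_eq, Set.mem_diff]
  constructor
  · intro h
    refine ⟨le_of_eq h, ?_⟩
    rw [h]
    intro hle
    have := (pow_lt_pow_iff_right_of_lt_one₀ (by norm_num : (0:ℝ) < 3⁻¹) (by norm_num)).mpr
      (Nat.lt_succ_self n)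
    rw [Nat.succ_eq_add_one] at this
    linarith
  · rintro ⟨h1, h2⟩
    have hx0 : x ≠ 0 := by
      intro h
      apply h2
      rw [h, norm_zero]
      positivity
    rw [Padic.norm_eq_zpow_neg_valuation hx0] at h1 h2 ⊢
    rw [inv_pow_eq_zpow] at h1 h2 ⊢
    simp only [Nat.cast_ofNat] at h1 h2 ⊢
    have h3 : (1:ℝ) < 3 := by norm_num
    rw [zpow_le_zpow_iff_right₀ h3, neg_le_neg_iff] at h1
    rw [not_le] at h2
    rw [zpow_lt_zpow_iff_right₀ h3, neg_lt_neg_iff] at h2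
    have : x.valuation = n := by push_cast at h1 h2 ⊢; omega
    rw [this]

lemma Aset_disjoint : Pairwise (Function.onFun Disjoint Aset) := by
  intro n m hnm
  rw [Function.onFun, Set.disjoint_left]
  intro x hn hm
  apply hnm
  have heq : (3:ℝ)⁻¹ ^ n = 3⁻¹ ^ m := hn.symm.trans hm
  by_contra hne
  have hmono : ∀ {a b : ℕ}, a < b → (3:ℝ)⁻¹ ^ b < 3⁻¹ ^ a := fun h =>
    (pow_lt_pow_iff_right_of_lt_one₀ (by norm_num) (by norm_num)).mpr h
  rcases lt_or_gt_of_ne hne with h | h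
  · linarith [hmono h]
  · linarith [hmono h]

lemma Aset_union : (⋃ n, Aset n) = Bset 0 \ {0} := by
  ext x
  simp only [Set.mem_iUnion, Aset, Set.mem_setOf_eq, Set.mem_diff, Bset,
    Set.mem_singleton_iff]
  constructor
  · rintro ⟨n, hn⟩
    constructor
    · rw [hn, pow_zero]
      exact pow_le_one₀ (by norm_num) (by norm_num)
    · intro h
      rw [h, norm_zero] at hn
      have : (0:ℝ) < (3:ℝ)⁻¹ ^ n := by positivity
      linarith [hn ▸ this]
  · rintro ⟨h1, h2⟩
    have hv : 0 ≤ x.valuation := (Padic.norm_le_one_iff_val_nonneg x).mp (by simpa using h1)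
    refine ⟨x.valuation.toNat, ?_⟩
    rw [Padic.norm_eq_zpow_neg_valuation h2, inv_pow_eq_zpow]
    congr 1
    omega

lemma measure_Aset (μ : Measure ℚ_[3]) [μ.IsAddHaarMeasure]
    (hO : μ {x : ℚ_[3] | ‖x‖ ≤ 1} = 1) (n : ℕ) :
    μ (Aset n) = ENNReal.ofReal ((3:ℝ)⁻¹ ^ n - (3:ℝ)⁻¹ ^ (n+1)) := by
  have hsub : Bset (n+1) ⊆ Bset n := by
    intro x hx
    simp only [Bset, Set.mem_setOf_eq] at hx ⊢
    refine le_trans hx ?_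
    rw [pow_succ]
    nlinarith [pow_pos (by norm_num : (0:ℝ) < 3⁻¹) n]
  have hfin : μ (Bset (n+1)) ≠ ⊤ := by
    rw [measure_Bset μ hO]; exact (ENNReal.pow_lt_top (by norm_num)).ne
  have hd := measure_diff hsub (measurable_Bset (n+1)).nullMeasurableSet hfin
  rw [Aset_eq, hd, measure_Bset μ hO, measure_Bset μ hO]
  have h1 : ∀ m : ℕ, (3:ℝ≥0∞)⁻¹ ^ m = ENNReal.ofReal ((3:ℝ)⁻¹ ^ m) := by
    intro m
    rw [ENNReal.ofReal_pow (by norm_num), ENNReal.ofReal_inv_of_pos (by norm_num)]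
    norm_num
  rw [h1, h1, ENNReal.ofReal_sub _ (by positivity)]

lemma term_eq (s : ℝ) (n : ℕ) :
    ((3:ℝ)⁻¹ ^ n) ^ (-s) * ((3:ℝ)⁻¹ ^ n - (3:ℝ)⁻¹ ^ (n+1)) = 2/3 * ((3:ℝ) ^ (s-1)) ^ n := by
  have h3 : (0:ℝ) < 3 := by norm_num
  have hb : ((3:ℝ)⁻¹) ^ n = (3:ℝ) ^ (-(n:ℝ)) := by
    rw [inv_pow, ← Real.rpow_natCast 3 n, ← Real.rpow_neg h3.le]
  have hsub : (3:ℝ)⁻¹ ^ n - (3:ℝ)⁻¹ ^ (n+1) = (3:ℝ)⁻¹ ^ n * (2/3) := by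
    rw [pow_succ]; ring
  have key : ((3:ℝ)^(-(n:ℝ)))^(-s) * (3:ℝ)^(-(n:ℝ)) = (3:ℝ)^((s-1)*(n:ℝ)) := by
    rw [← Real.rpow_mul h3.le, ← Real.rpow_add h3]
    congr 1; ring
  have hr : ((3:ℝ)^(s-1))^n = (3:ℝ)^((s-1)*(n:ℝ)) := by
    rw [← Real.rpow_natCast ((3:ℝ)^(s-1)) n, ← Real.rpow_mul h3.le]
  rw [hsub, hb, hr, ← key]
  ring

lemma measure_zero_singleton (μ : Measure ℚ_[3]) [μ.IsAddHaarMeasure]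
    (hO : μ {x : ℚ_[3] | ‖x‖ ≤ 1} = 1) : μ {(0:ℚ_[3])} = 0 := by
  have hle : ∀ n : ℕ, μ {(0:ℚ_[3])} ≤ (3:ℝ≥0∞)⁻¹ ^ n := by
    intro n
    rw [← measure_Bset μ hO n]
    apply measure_mono
    intro x hx
    simp only [Set.mem_singleton_iff] at hx
    simp only [Bset, Set.mem_setOf_eq, hx, norm_zero]
    positivity
  have ht := ENNReal.tendsto_pow_atTop_nhds_zero_of_lt_one
    (by norm_num : (3:ℝ≥0∞)⁻¹ < 1)
  exact le_antisymm (ge_of_tendsto' ht hle) zero_le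

lemma part_c (μ : Measure ℚ_[3]) [μ.IsAddHaarMeasure]
    (hO : μ {x : ℚ_[3] | ‖x‖ ≤ 1} = 1) (s : ℝ) (hs : 0 < s) :
    (∫⁻ x in {x : ℚ_[3] | ‖x‖ ≤ 1}, ENNReal.ofReal (‖x‖ ^ (-s)) ∂μ) < ⊤ ↔ s < 1 := by
  have hB0 : {x : ℚ_[3] | ‖x‖ ≤ 1} = Bset 0 := by simp [Bset]
  have haeeq : (Bset 0 : Set ℚ_[3]) =ᵐ[μ] ⋃ n, Aset n := by
    rw [Aset_union]
    refine MeasureTheory.ae_eq_set.mpr ⟨?_, ?_⟩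
    · refine measure_mono_null ?_ (measure_zero_singleton μ hO)
      intro x hx
      simp only [Set.mem_diff, Set.mem_singleton_iff, not_and, not_not] at hx ⊢
      exact hx.2 hx.1
    · rw [Set.diff_eq_empty.mpr Set.diff_subset, measure_empty]
  rw [hB0, setLIntegral_congr haeeq, lintegral_iUnion measurable_Aset Aset_disjoint]
  have hterm : ∀ n : ℕ, (∫⁻ x in Aset n, ENNReal.ofReal (‖x‖ ^ (-s)) ∂μ)
      = ENNReal.ofReal (2/3) * (ENNReal.ofReal ((3:ℝ) ^ (s-1)))^n := by
    intro n
    have h1 : (∫⁻ x in Aset n, ENNReal.ofReal (‖x‖ ^ (-s)) ∂μ)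
        = ∫⁻ _ in Aset n, ENNReal.ofReal (((3:ℝ)⁻¹ ^ n) ^ (-s)) ∂μ := by
      refine setLIntegral_congr_fun (measurable_Aset n) (fun x hx => ?_)
      have hxn : ‖x‖ = (3:ℝ)⁻¹ ^ n := hx
      rw [hxn]
    rw [h1, setLIntegral_const, measure_Aset μ hO,
      ← ENNReal.ofReal_mul (by positivity), term_eq s n,
      ENNReal.ofReal_mul (by norm_num), ENNReal.ofReal_pow (by positivity)]
  rw [tsum_congr hterm, ENNReal.tsum_mul_left, ENNReal.tsum_geometric]
  set r := ENNReal.ofReal ((3:ℝ) ^ (s-1)) with hr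
  have hc0 : (ENNReal.ofReal (2/3 : ℝ)) ≠ 0 := (ENNReal.ofReal_pos.mpr (by norm_num)).ne'
  have hstep : ENNReal.ofReal (2/3 : ℝ) * (1-r)⁻¹ < ⊤ ↔ (1-r)⁻¹ < ⊤ := by
    constructor
    · intro h
      rcases ENNReal.mul_lt_top_iff.mp h with ⟨_, h2⟩ | h0 | h0
      · exact h2
      · exact absurd h0 hc0
      · rw [h0]; simp
    · intro h
      exact ENNReal.mul_lt_top ENNReal.ofReal_lt_top h
  rw [hstep, ENNReal.inv_lt_top, tsub_pos_iff_lt, hr, ENNReal.ofReal_lt_one]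
  rw [show (1:ℝ) = (3:ℝ)^(0:ℝ) by rw [Real.rpow_zero], Real.rpow_lt_rpow_left_iff (by norm_num)]
  constructor <;> intro h <;> linarith

lemma part_a : ¬ ∃ y : ℚ_[3], y ^ 2 = -1 := by
  rintro ⟨y, hy⟩
  have hn : ‖y‖ ≤ 1 := by
    have h2 : ‖y‖^2 = 1 := by rw [← norm_pow, hy]; simp
    nlinarith [norm_nonneg y]
  set z : ℤ_[3] := ⟨y, hn⟩ with hzdef
  have hz2 : z ^ 2 = -1 := by
    have hcoe : (z : ℚ_[3]) = y := rfl
    apply Subtype.coe_injective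
    push_cast [hcoe, hy]
    rfl
  have h3 : (PadicInt.toZMod z) ^ 2 = -1 := by rw [← map_pow, hz2]; simp
  have : ∀ a : ZMod 3, a ^ 2 ≠ -1 := by decide
  exact this _ h3

lemma part_b : ∃ y : AdjoinRoot (X ^ 2 + 1 : Polynomial ℚ_[3]), y ^ 2 = -1 := by
  refine ⟨AdjoinRoot.root _, ?_⟩
  have h := AdjoinRoot.mk_self (f := (X ^ 2 + 1 : Polynomial ℚ_[3]))
  rw [map_add, map_pow, map_one, AdjoinRoot.mk_X] at h
  linear_combination h

end DescentAux

/-- Example of failure of descent for non-existential functions: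
`−1` is not a square in `ℚ₃`, but is a square in `ℚ₃(√−1)`; consequently, for the
function `f(x) = 1/x` if `x ≠ 0 ∧ ∀ y, y² ≠ −1` and `f(x) = 0` otherwise:
over `ℚ₃`, `∫_{‖x‖ ≤ 1} |f(x)|^s dx = ∫_{‖x‖ ≤ 1} ‖x‖^{−s} dx` is finite iff
`s < 1` (so the local index of `|f|` at `0` equals `1`), while over
`L = ℚ₃(√−1)` the function `f` is identically `0`, so all its integrals vanish and
the local index at `0` is `∞`; in particular the index strictly increases when
passing from `ℚ₃` to `ℚ₃(√−1)`. -/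
theorem descent_failure_example [MeasurableSpace ℚ_[3]] [BorelSpace ℚ_[3]]
    (μ : Measure ℚ_[3]) [μ.IsAddHaarMeasure] (hO : μ {x : ℚ_[3] | ‖x‖ ≤ 1} = 1) :
    -- (a)  −1 is not a square in ℚ₃ …
    (¬ ∃ y : ℚ_[3], y ^ 2 = -1) ∧
    -- (b)  … but is a square in ℚ₃(√−1)
    (∃ y : AdjoinRoot (X ^ 2 + 1 : Polynomial ℚ_[3]), y ^ 2 = -1) ∧
    -- (c)  ∫_{O_{ℚ₃}} |1/x|^s dx is finite iff s < 1, so ind_0^{ℚ₃}(|f|) = 1,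
    --      while f ≡ 0 on ℚ₃(√−1) by (b), so ind_0^{ℚ₃(√−1)}(|f|) = ∞.
    (∀ s : ℝ, 0 < s →
      ((∫⁻ x in {x : ℚ_[3] | ‖x‖ ≤ 1}, ENNReal.ofReal (‖x‖ ^ (-s)) ∂μ) < ⊤ ↔ s < 1)) := by
  exact ⟨DescentAux.part_a, DescentAux.part_b, fun s hs => DescentAux.part_c μ hO s hs⟩
end
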